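/- arXiv:2503.17496 — 6 statements merged into one kernel-verified Lean document; each statement's English description precedes it below -/
import Mathlib

section
/- Let A ∈ ℂ^{n×n}, B ∈ ℂ^{m×m}, C, X ∈ ℂ^{m×n} with XA − BX = C, and let H = [[A, 0], [C, B]]. Then for every polynomial q ∈ ℂ[x], q(H) = [[q(A), 0], [X·q(A) − q(B)·X, q(B)]]; in particular the diagonal blocks of q(H) are q(A) and q(B) and its lower-left block is X·q(A) − q(B)·X. -/
/-!
Because `X * A - B * X = C`, the unipotent matrix `P = [[1, 0], [X, 1]]` conjugates the
block-diagonal matrix `[[A, 0], [0, B]]` to `H`. Polynomials respect this similarity and act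
blockwise on block-diagonal matrices, so `q(H) = P * [[q(A), 0], [0, q(B)]] * P⁻¹`, and
multiplying out with `P⁻¹ = [[1, 0], [-X, 1]]` gives the claimed blocks.
-/

open Polynomial Matrix

theorem Polynomial.aeval_mul_eq_mul_aeval_of_semiconjBy {R A : Type*} [CommSemiring R]
    [Semiring A] [Algebra R A] {p a b : A} (h : SemiconjBy p b a) (q : R[X]) :
    aeval a q * p = p * aeval b q := by
  induction q using Polynomial.induction_on' with
  | add q r hq hr => rw [map_add, map_add, add_mul, mul_add, hq, hr]
  | monomial k c =>
    rw [aeval_monomial, aeval_monomial, mul_assoc, ← (h.pow_right k).eq, ← mul_assoc,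
      Algebra.commutes, mul_assoc]

namespace Matrix

variable {R l m : Type*} [CommRing R] [Fintype l] [Fintype m] [DecidableEq l] [DecidableEq m]

def fromBlocksDiagAlgHom : Matrix l l R × Matrix m m R →ₐ[R] Matrix (l ⊕ m) (l ⊕ m) R where
  toFun x := fromBlocks x.1 0 0 x.2
  map_one' := fromBlocks_one
  map_mul' x y := by simp [fromBlocks_multiply]
  map_zero' := fromBlocks_zero
  map_add' x y := by simp [fromBlocks_add]
  commutes' c := by
    simp [Algebra.algebraMap_eq_smul_one, ← fromBlocks_one, fromBlocks_smul]

theorem aeval_fromBlocks_zero_zero (A : Matrix l l R) (B : Matrix m m R) (q : R[X]) :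
    aeval (fromBlocks A 0 0 B) q = fromBlocks (aeval A q) 0 0 (aeval B q) := by
  change aeval (fromBlocksDiagAlgHom (A, B)) q = _
  rw [aeval_algHom_apply, aeval_prod_apply]
  rfl

theorem semiconjBy_fromBlocks_of_sylvester {A : Matrix l l R} {B : Matrix m m R}
    {C X : Matrix m l R} (hX : X * A - B * X = C) :
    SemiconjBy (fromBlocks 1 0 X 1) (fromBlocks A 0 0 B) (fromBlocks A 0 C B) := by
  simp [SemiconjBy, fromBlocks_multiply, ← hX]

theorem aeval_fromBlocks_of_sylvester {A : Matrix l l R} {B : Matrix m m R}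
    {C X : Matrix m l R} (hX : X * A - B * X = C) (q : R[X]) :
    aeval (fromBlocks A 0 C B) q =
      fromBlocks (aeval A q) 0 (X * aeval A q - aeval B q * X) (aeval B q) := by
  have hP : fromBlocks (1 : Matrix l l R) 0 X (1 : Matrix m m R) * fromBlocks 1 0 (-X) 1 = 1 := by
    simp [fromBlocks_multiply]
  calc aeval (fromBlocks A 0 C B) q
      = aeval (fromBlocks A 0 C B) q * fromBlocks 1 0 X 1 * fromBlocks 1 0 (-X) 1 := by
        rw [mul_assoc, hP, mul_one]
    _ = fromBlocks 1 0 X 1 * fromBlocks (aeval A q) 0 0 (aeval B q) * fromBlocks 1 0 (-X) 1 := by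
        rw [aeval_mul_eq_mul_aeval_of_semiconjBy (semiconjBy_fromBlocks_of_sylvester hX),
          aeval_fromBlocks_zero_zero]
    _ = fromBlocks (aeval A q) 0 (X * aeval A q - aeval B q * X) (aeval B q) := by
        simp [fromBlocks_multiply, sub_eq_add_neg]

end Matrix

/-- If `X*A - B*X = C` and `H = [[A, 0], [C, B]]`, then for every polynomial `q`,
`q(H) = [[q(A), 0], [X*q(A) - q(B)*X, q(B)]]`; in particular, the diagonal blocks of `q(H)` are
`q(A)` and `q(B)`, and its lower-left block is `X*q(A) - q(B)*X`. -/
theorem aeval_block_sylvester {n m : ℕ}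
    (A : Matrix (Fin n) (Fin n) ℂ) (B : Matrix (Fin m) (Fin m) ℂ)
    (C X : Matrix (Fin m) (Fin n) ℂ)
    (hX : X * A - B * X = C)
    (q : Polynomial ℂ) :
    Polynomial.aeval (Matrix.fromBlocks A 0 C B) q =
        Matrix.fromBlocks (Polynomial.aeval A q) 0
          (X * Polynomial.aeval A q - Polynomial.aeval B q * X) (Polynomial.aeval B q) ∧
      (Polynomial.aeval (Matrix.fromBlocks A 0 C B) q).toBlocks₁₁ = Polynomial.aeval A q ∧
      (Polynomial.aeval (Matrix.fromBlocks A 0 C B) q).toBlocks₂₂ = Polynomial.aeval B q ∧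
      (Polynomial.aeval (Matrix.fromBlocks A 0 C B) q).toBlocks₂₁ =
        X * Polynomial.aeval A q - Polynomial.aeval B q * X := by
  rw [aeval_fromBlocks_of_sylvester hX]
  exact ⟨rfl, toBlocks_fromBlocks₁₁ .., toBlocks_fromBlocks₂₂ .., toBlocks_fromBlocks₂₁ ..⟩
end

section
/- Let (p_j)_{j≥0} ⊂ ℂ[x] satisfy the three-term recurrence with coefficients (a_k), (b_k) (all b_k ≠ 0), let A ∈ ℂ^{n×n}, B ∈ ℂ^{m×m}, C ∈ ℂ^{m×n}, and let H = [[A, 0], [C, B]]. Define matrices G_j ∈ ℂ^{m×n} by G_0 = −C, G_1 = (1/b_0)(G_0·A + (a_0 + 1)·C), and G_j = (1/b_{j−1})(G_{j−1}·A + p_{j−1}(B)·C − a_{j−1}·G_{j−1} − b_{j−2}·G_{j−2}) for j ≥ 2. Then for every j ≥ 0, the lower-left m×n block of p_j(H) equals C·p_j(A) + G_j. -/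
/-!
For `H = [[A, 0], [C, B]]` the lower-left block of `q(H)` differs from `C q(A)` by a defect
`D(q)` that is linear in `q` and satisfies `D(1) = -C` and `D(X q) = D(q) A + q(B) C`, because
the lower-right block of `q(H)` is `q(B)`. Applying `D` to the three-term recurrence therefore
shows that `D(p_j)` obeys the recurrence defining `G_j`, with the same initial values.
-/

open Polynomial Matrix

section LowerBlockTriangular

variable {R : Type*} [CommRing R] {m n : Type*} [Fintype m] [Fintype n]
  (A : Matrix n n R) (B : Matrix m m R) (C : Matrix m n R)

lemma toBlocks₂₁_mul_fromBlocks_zero₁₂ (M : Matrix (n ⊕ m) (n ⊕ m) R) :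
    (M * fromBlocks A 0 C B).toBlocks₂₁ = M.toBlocks₂₁ * A + M.toBlocks₂₂ * C := by
  conv_lhs => rw [← fromBlocks_toBlocks M, fromBlocks_multiply]
  simp

lemma toBlocks₂₂_mul_fromBlocks_zero₁₂ (M : Matrix (n ⊕ m) (n ⊕ m) R) :
    (M * fromBlocks A 0 C B).toBlocks₂₂ = M.toBlocks₂₂ * B := by
  conv_lhs => rw [← fromBlocks_toBlocks M, fromBlocks_multiply]
  simp

variable [DecidableEq m] [DecidableEq n]

lemma toBlocks₂₂_aeval_fromBlocks_zero₁₂ (q : R[X]) :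
    (aeval (fromBlocks A 0 C B) q).toBlocks₂₂ = aeval B q := by
  induction q using Polynomial.induction_on with
  | C c => simp [Algebra.algebraMap_eq_smul_one, ← fromBlocks_one, fromBlocks_smul]
  | add f g hf hg => simp only [map_add]; exact congrArg₂ (· + ·) hf hg
  | monomial k c ih =>
    rw [pow_succ, ← mul_assoc, map_mul, aeval_X, toBlocks₂₂_mul_fromBlocks_zero₁₂, ih]
    simp only [map_mul, aeval_X]

noncomputable def lowerLeftDefect : R[X] →ₗ[R] Matrix m n R where
  toFun q := (aeval (fromBlocks A 0 C B) q).toBlocks₂₁ - C * aeval A q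
  map_add' f g := by ext i j; simp [toBlocks₂₁, Matrix.mul_add]; ring
  map_smul' c f := by ext i j; simp [toBlocks₂₁]; ring

lemma toBlocks₂₁_aeval_fromBlocks_zero₁₂ (q : R[X]) :
    (aeval (fromBlocks A 0 C B) q).toBlocks₂₁ = C * aeval A q + lowerLeftDefect A B C q := by
  simp [lowerLeftDefect]

lemma lowerLeftDefect_one : lowerLeftDefect A B C 1 = -C := by
  simp [lowerLeftDefect, ← fromBlocks_one]

lemma lowerLeftDefect_C_mul (c : R) (q : R[X]) :
    lowerLeftDefect A B C (Polynomial.C c * q) = c • lowerLeftDefect A B C q := by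
  rw [C_mul', map_smul]

lemma lowerLeftDefect_X_mul (q : R[X]) :
    lowerLeftDefect A B C (X * q) = lowerLeftDefect A B C q * A + aeval B q * C := by
  simp only [lowerLeftDefect, LinearMap.coe_mk, AddHom.coe_mk, mul_comm X q, map_mul, aeval_X,
    toBlocks₂₁_mul_fromBlocks_zero₁₂, toBlocks₂₂_aeval_fromBlocks_zero₁₂, Matrix.sub_mul,
    Matrix.mul_assoc]
  abel

end LowerBlockTriangular

/-- Let `(p_j)` satisfy the three-term recurrence with coefficients `(a_k)`,
`(b_k)` (all `b_k ≠ 0`), and let `H = [[A, 0], [C, B]]`.  Define `G_0 = -C`,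
`G_1 = (1/b_0)(G_0*A + (a_0+1)*C)`, and for `j ≥ 2`,
`G_j = (1/b_{j-1})(G_{j-1}*A + p_{j-1}(B)*C - a_{j-1}*G_{j-1} - b_{j-2}*G_{j-2})`.
Then the lower-left `m×n` block of `p_j(H)` equals `C*p_j(A) + G_j` for every `j`. -/
theorem lower_left_block_recurrence {n m : ℕ}
    (a b : ℕ → ℂ) (hb : ∀ k, b k ≠ 0)
    (p : ℕ → Polynomial ℂ)
    (hp0 : p 0 = 1)
    (hp1 : Polynomial.X * p 0 = Polynomial.C (a 0) * p 0 + Polynomial.C (b 0) * p 1)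
    (hprec : ∀ k, 1 ≤ k →
      Polynomial.X * p k =
        Polynomial.C (b (k - 1)) * p (k - 1) + Polynomial.C (a k) * p k +
          Polynomial.C (b k) * p (k + 1))
    (A : Matrix (Fin n) (Fin n) ℂ) (B : Matrix (Fin m) (Fin m) ℂ)
    (C : Matrix (Fin m) (Fin n) ℂ)
    (G : ℕ → Matrix (Fin m) (Fin n) ℂ)
    (hG0 : G 0 = -C)
    (hG1 : G 1 = (b 0)⁻¹ • (G 0 * A + (a 0 + 1) • C))
    (hGrec : ∀ j, 2 ≤ j →
      G j = (b (j - 1))⁻¹ •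
        (G (j - 1) * A + Polynomial.aeval B (p (j - 1)) * C - a (j - 1) • G (j - 1)
          - b (j - 2) • G (j - 2))) :
    ∀ j, (Polynomial.aeval (Matrix.fromBlocks A 0 C B) (p j)).toBlocks₂₁ =
      C * Polynomial.aeval A (p j) + G j := by
  have hDG : ∀ j, lowerLeftDefect A B C (p j) = G j := by
    intro j
    induction j using Nat.twoStepInduction with
    | zero => rw [hp0, hG0, lowerLeftDefect_one]
    | one =>
      have h := congrArg (lowerLeftDefect A B C) hp1
      simp only [lowerLeftDefect_X_mul, map_add, lowerLeftDefect_C_mul, hp0,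
        lowerLeftDefect_one, map_one, Matrix.one_mul] at h
      rw [← smul_right_inj (hb 0), hG1, smul_inv_smul₀ (hb 0), hG0]
      linear_combination (norm := module) -h
    | more j ih0 ih1 =>
      have h := congrArg (lowerLeftDefect A B C) (hprec (j + 1) (by omega))
      simp only [lowerLeftDefect_X_mul, map_add, lowerLeftDefect_C_mul, Nat.add_sub_cancel, ih0,
        ih1] at h
      have hG := hGrec (j + 2) (by omega)
      simp only [Nat.add_sub_cancel, Nat.add_succ_sub_one] at hG
      rw [← smul_right_inj (hb (j + 1)), hG, smul_inv_smul₀ (hb (j + 1))]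
      linear_combination (norm := module) -h
  intro j
  rw [toBlocks₂₁_aeval_fromBlocks_zero₁₂, hDG]
end

section
/- Let M ∈ ℂ^{ℓ×ℓ} be diagonalizable, M = VΛV^{−1}, let (p_j)_{j≥0} ⊂ ℂ[x], (α_j)_{j≥0} ⊂ ℂ, and suppose there are constants C, M₀, c > 0 and ρ > τ > 0 with ρ > 1 such that |α_j| ≤ C·M₀·ρ^{−j} for all j and |p_j(λ)| ≤ c·τ^{j} for all j and all λ ∈ σ(M). Then the series F = Σ_{j≥0} α_j p_j(M) converges in ℂ^{ℓ×ℓ}, and for every k ≥ 0, ‖F − Σ_{j=0}^{k−1} α_j p_j(M)‖₂ ≤ c·C·M₀·‖V‖₂·‖V^{−1}‖₂·(τ/ρ)^{k}/(1 − τ/ρ). -/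
/-! Conjugation by `V` turns `p_j(M)` into the diagonal matrix `p_j(Λ)`, whose spectral norm is
the largest `|p_j(λ)|` over the eigenvalues `λ` of `M`. Hence
`‖α_j p_j(M)‖₂ ≤ c·K·M₀·‖V‖₂·‖V⁻¹‖₂·(τ/ρ)^j`, and the tail estimate is that of a geometric
series. -/

/-- The spectral norm of a complex matrix: the operator norm of the induced linear map between
Euclidean spaces. -/
noncomputable def specNorm {m n : ℕ} (M : Matrix (Fin m) (Fin n) ℂ) : ℝ :=
  ‖LinearMap.toContinuousLinearMap (Matrix.toEuclideanLin M)‖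

open Polynomial
open scoped Matrix.Norms.L2Operator

theorem Polynomial.aeval_units_conj {R A : Type*} [CommSemiring R] [Ring A] [Algebra R A]
    (u : Aˣ) (a : A) (q : R[X]) :
    aeval (↑u * a * ↑u⁻¹) q = ↑u * aeval a q * ↑u⁻¹ :=
  aeval_algHom_apply (MulSemiringAction.toAlgHom R A (ConjAct.toConjAct u)) a q

theorem Matrix.aeval_diagonal {R n : Type*} [CommSemiring R] [Fintype n] [DecidableEq n]
    (d : n → R) (q : R[X]) : aeval (diagonal d) q = diagonal fun i => q.eval (d i) := by
  rw [← diagonalAlgHom_apply R, aeval_algHom_apply, aeval_pi_apply]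
  simp

theorem specNorm_eq_l2_opNorm {m n : ℕ} (A : Matrix (Fin m) (Fin n) ℂ) : specNorm A = ‖A‖ := rfl

namespace Matrix

variable {𝕜 n : Type*} [RCLike 𝕜] [Fintype n] [DecidableEq n]

theorem spectrum_eq_range_diag_of_conj {M V Λ : Matrix n n 𝕜} (hV : IsUnit V.det)
    (hΛ : Λ.IsDiag) (hM : M = V * Λ * V⁻¹) : spectrum 𝕜 M = Set.range Λ.diag := by
  obtain ⟨u, rfl⟩ := (isUnit_iff_isUnit_det V).2 hV
  rw [hM, ← coe_units_inv, spectrum.units_conjugate, ← hΛ.diagonal_diag, spectrum_diagonal,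
    diag_diagonal]

theorem l2_opNorm_aeval_le_of_conj {M V Λ : Matrix n n 𝕜} (hV : IsUnit V.det)
    (hΛ : Λ.IsDiag) (hM : M = V * Λ * V⁻¹) (q : 𝕜[X]) {b : ℝ} (hb0 : 0 ≤ b)
    (hb : ∀ μ ∈ spectrum 𝕜 M, ‖q.eval μ‖ ≤ b) : ‖aeval M q‖ ≤ ‖V‖ * b * ‖V⁻¹‖ := by
  have hdiag : ‖diagonal fun i => q.eval (Λ.diag i)‖ ≤ b := by
    rw [l2_opNorm_diagonal, pi_norm_le_iff_of_nonneg hb0]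
    exact fun i => hb _ (spectrum_eq_range_diag_of_conj hV hΛ hM ▸ Set.mem_range_self i)
  obtain ⟨u, rfl⟩ := (isUnit_iff_isUnit_det V).2 hV
  rw [hM, ← coe_units_inv, aeval_units_conj, ← hΛ.diagonal_diag, aeval_diagonal]
  calc _ ≤ ‖(u : Matrix n n 𝕜)‖ * ‖diagonal fun i => q.eval (Λ.diag i)‖ *
        ‖(↑u⁻¹ : Matrix n n 𝕜)‖ := norm_mul₃_le
    _ ≤ _ := by gcongr

end Matrix

theorem akhiezer_iteration_conv_rate_worst_offender_general {ℓ : ℕ}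
    (M V Λ : Matrix (Fin ℓ) (Fin ℓ) ℂ)
    (hV : IsUnit V.det) (hΛ : Λ.IsDiag) (hM : M = V * Λ * V⁻¹)
    (p : ℕ → Polynomial ℂ) (α : ℕ → ℂ)
    (K M₀ c ρ τ : ℝ) (hc : 0 < c)
    (hτ : 0 < τ) (hτρ : τ < ρ)
    (hα : ∀ j, ‖α j‖ ≤ K * M₀ * ρ⁻¹ ^ j)
    (hp : ∀ j, ∀ μ ∈ spectrum ℂ M, ‖(p j).eval μ‖ ≤ c * τ ^ j) :
    Summable (fun j => α j • Polynomial.aeval M (p j)) ∧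
      ∀ k, specNorm ((∑' j, α j • Polynomial.aeval M (p j)) -
            ∑ j ∈ Finset.range k, α j • Polynomial.aeval M (p j)) ≤
          c * K * M₀ * specNorm V * specNorm V⁻¹ * (τ / ρ) ^ k / (1 - τ / ρ) := by
  have hr : τ / ρ < 1 := (div_lt_one (hτ.trans hτρ)).2 hτρ
  have hbound (j : ℕ) : ‖α j • aeval M (p j)‖ ≤ c * K * M₀ * ‖V‖ * ‖V⁻¹‖ * (τ / ρ) ^ j := by
    have hpj := Matrix.l2_opNorm_aeval_le_of_conj hV hΛ hM (p j) (by positivity) (hp j)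
    calc ‖α j • aeval M (p j)‖ ≤ K * M₀ * ρ⁻¹ ^ j * (‖V‖ * (c * τ ^ j) * ‖V⁻¹‖) := by
          rw [norm_smul]
          exact mul_le_mul (hα j) hpj (norm_nonneg _) ((norm_nonneg _).trans (hα j))
      _ = _ := by rw [div_pow, div_eq_mul_inv, inv_pow]; ring
  -- The L2 operator norm on matrices induces the entrywise topology, so this `Summable` and
  -- this `tsum` are those of the statement.
  have hsum : Summable fun j => α j • aeval M (p j) :=
    summable_iff_cauchySeq_finset.2 (cauchySeq_finset_of_geometric_bound hr hbound)
  refine ⟨hsum, fun k => ?_⟩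
  rw [specNorm_eq_l2_opNorm, norm_sub_rev]
  exact norm_sub_le_of_geometric_bound_of_hasSum hr hbound hsum.hasSum k

/-- Let `M = V Λ V⁻¹` be diagonalizable.  If `|α_j| ≤ C·M₀·ρ^{-j}` and
`|p_j(λ)| ≤ c·τ^j` for all `j` and all `λ ∈ σ(M)`, where `ρ > τ > 0` and `ρ > 1`, then
`F = Σ_j α_j p_j(M)` converges and for every `k`,
`‖F - Σ_{j<k} α_j p_j(M)‖₂ ≤ c·C·M₀·‖V‖₂·‖V⁻¹‖₂·(τ/ρ)^k/(1 - τ/ρ)`. -/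
theorem akhiezer_iteration_conv_rate_worst_offender {ℓ : ℕ}
    (M V Λ : Matrix (Fin ℓ) (Fin ℓ) ℂ)
    (hV : IsUnit V.det) (hΛ : Λ.IsDiag) (hM : M = V * Λ * V⁻¹)
    (p : ℕ → Polynomial ℂ) (α : ℕ → ℂ)
    (K M₀ c ρ τ : ℝ) (hK : 0 < K) (hM₀ : 0 < M₀) (hc : 0 < c)
    (hτ : 0 < τ) (hτρ : τ < ρ) (hρ : 1 < ρ)
    (hα : ∀ j, ‖α j‖ ≤ K * M₀ * ρ⁻¹ ^ j)
    (hp : ∀ j, ∀ μ ∈ spectrum ℂ M, ‖(p j).eval μ‖ ≤ c * τ ^ j) :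
    Summable (fun j => α j • Polynomial.aeval M (p j)) ∧
      ∀ k, specNorm ((∑' j, α j • Polynomial.aeval M (p j)) -
            ∑ j ∈ Finset.range k, α j • Polynomial.aeval M (p j)) ≤
          c * K * M₀ * specNorm V * specNorm V⁻¹ * (τ / ρ) ^ k / (1 - τ / ρ) :=
  akhiezer_iteration_conv_rate_worst_offender_general M V Λ hV hΛ hM p α K M₀ c ρ τ hc hτ hτρ hα hp
end

section
/- Let A ∈ ℂ^{n×n} and B ∈ ℂ^{m×m} with n, m ≥ 1. Then ν ∈ ℂ is an eigenvalue of the Sylvester operator S_{A,B} : ℂ^{m×n} → ℂ^{m×n} if and only if ν = λ − μ for some eigenvalue λ of A and some eigenvalue μ of B; that is, σ(S_{A,B}) = σ(A) − σ(B). -/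
open scoped Pointwise

/-- The Sylvester operator `Y ↦ Y*A - B*Y` as a linear endomorphism of `ℂ^{m×n}`. -/
noncomputable def sylvesterOp {n m : ℕ} (A : Matrix (Fin n) (Fin n) ℂ)
    (B : Matrix (Fin m) (Fin m) ℂ) : Module.End ℂ (Matrix (Fin m) (Fin n) ℂ) where
  toFun Y := Y * A - B * Y
  map_add' X Y := by
    simp only [Matrix.add_mul, Matrix.mul_add, sub_add_sub_comm]
  map_smul' c Y := by
    simp [Matrix.smul_mul, Matrix.mul_smul, smul_sub]

/-! A rank-one matrix `w uᵀ`, with `w` a right eigenvector of `B` for `μ` and `u` a left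
eigenvector of `A` for `λ`, is an eigenvector of `S_{A,B}` for `λ - μ`. Conversely, an
eigenvector `Y` for `ν` intertwines `A` and `ν + B`, hence annihilates `χ_{ν+B}(A)`; this matrix
is therefore singular, and by the spectral mapping theorem `χ_{ν+B}` vanishes at an eigenvalue
`λ` of `A`, so that `λ - ν ∈ σ(B)`. -/

open Polynomial Module.End

namespace Matrix

theorem vecMulVec_ne_zero' {R m n : Type*} [MulZeroClass R] [NoZeroDivisors R] {w : m → R}
    {v : n → R} (hw : w ≠ 0) (hv : v ≠ 0) : vecMulVec w v ≠ 0 := by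
  obtain ⟨i, hi⟩ := Function.ne_iff.mp hw
  obtain ⟨j, hj⟩ := Function.ne_iff.mp hv
  exact fun h => mul_ne_zero hi hj congr($h i j)

variable {K : Type*} [Field K] {m n : Type*} [Fintype m] [Fintype n] [DecidableEq m] [DecidableEq n]

theorem mul_pow_of_mul_eq_mul {R : Type*} [Semiring R] {A : Matrix n n R} {B : Matrix m m R}
    {Y : Matrix m n R} (h : Y * A = B * Y) (k : ℕ) : Y * A ^ k = B ^ k * Y := by
  induction k with
  | zero => simp
  | succ k ih => rw [pow_succ, ← Matrix.mul_assoc, ih, Matrix.mul_assoc, h, ← Matrix.mul_assoc,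
      ← pow_succ]

theorem mul_aeval_of_mul_eq_mul {R : Type*} [CommSemiring R] {A : Matrix n n R}
    {B : Matrix m m R} {Y : Matrix m n R} (h : Y * A = B * Y) (p : R[X]) :
    Y * aeval A p = aeval B p * Y := by
  induction p using Polynomial.induction_on' with
  | add p q hp hq => rw [map_add, map_add, Matrix.mul_add, Matrix.add_mul, hp, hq]
  | monomial k c =>
    simp only [aeval_monomial, Algebra.algebraMap_eq_smul_one, Matrix.smul_mul, Matrix.one_mul,
      Matrix.mul_smul, mul_pow_of_mul_eq_mul h]

theorem exists_mem_spectrum_of_mul_eq_mul [IsAlgClosed K] {A : Matrix n n K}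
    {B : Matrix m m K} {Y : Matrix m n K} (hY : Y ≠ 0) (h : Y * A = B * Y) :
    ∃ lam, lam ∈ spectrum K A ∧ lam ∈ spectrum K B := by
  have hkill : Y * aeval A B.charpoly = 0 := by
    rw [mul_aeval_of_mul_eq_mul h, aeval_self_charpoly, Matrix.zero_mul]
  have hsingular : (0 : K) ∈ spectrum K (aeval A B.charpoly) := by
    rw [spectrum.zero_mem_iff]
    rintro ⟨u, hu⟩
    apply hY
    rw [← Matrix.mul_one Y, ← u.mul_inv, ← Matrix.mul_assoc, hu, hkill, Matrix.zero_mul]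
  have hdeg : 0 < B.charpoly.degree := by
    have : Nonempty m := by
      by_contra hm
      rw [not_nonempty_iff] at hm
      exact hY (Subsingleton.elim _ _)
    simp [charpoly_degree_eq_dim, Fintype.card_pos]
  rw [spectrum.map_polynomial_aeval_of_degree_pos A _ hdeg] at hsingular
  obtain ⟨lam, hlam, hroot⟩ := hsingular
  exact ⟨lam, hlam, mem_spectrum_iff_isRoot_charpoly.mpr hroot⟩

theorem exists_mulVec_eq_smul_of_mem_spectrum {A : Matrix n n K} {μ : K}
    (hμ : μ ∈ spectrum K A) : ∃ v ≠ 0, A *ᵥ v = μ • v := by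
  rw [← spectrum_toLin', ← hasEigenvalue_iff_mem_spectrum] at hμ
  obtain ⟨v, hv⟩ := hμ.exists_hasEigenvector
  exact ⟨v, hv.2, by simpa using hv.apply_eq_smul⟩

theorem exists_vecMul_eq_smul_of_mem_spectrum {A : Matrix n n K} {μ : K}
    (hμ : μ ∈ spectrum K A) : ∃ v ≠ 0, v ᵥ* A = μ • v := by
  rw [mem_spectrum_iff_isRoot_charpoly, ← charpoly_transpose,
    ← mem_spectrum_iff_isRoot_charpoly] at hμ
  simpa only [mulVec_transpose] using exists_mulVec_eq_smul_of_mem_spectrum hμ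

end Matrix

open Matrix

theorem sylvesterOp_apply {n m : ℕ} (A : Matrix (Fin n) (Fin n) ℂ)
    (B : Matrix (Fin m) (Fin m) ℂ) (Y : Matrix (Fin m) (Fin n) ℂ) :
    sylvesterOp A B Y = Y * A - B * Y := rfl

theorem sylvesterOp_vecMulVec {n m : ℕ} {A : Matrix (Fin n) (Fin n) ℂ}
    {B : Matrix (Fin m) (Fin m) ℂ} {u : Fin n → ℂ} {w : Fin m → ℂ} {lam μ : ℂ}
    (hu : u ᵥ* A = lam • u) (hw : B *ᵥ w = μ • w) :
    sylvesterOp A B (vecMulVec w u) = (lam - μ) • vecMulVec w u := by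
  rw [sylvesterOp_apply, vecMulVec_mul, mul_vecMulVec, hu, hw, vecMulVec_smul, smul_vecMulVec,
    sub_smul]

theorem hasEigenvalue_sylvesterOp_iff {n m : ℕ} (A : Matrix (Fin n) (Fin n) ℂ)
    (B : Matrix (Fin m) (Fin m) ℂ) (ν : ℂ) :
    HasEigenvalue (sylvesterOp A B) ν ↔
      ∃ lam ∈ spectrum ℂ A, ∃ μ ∈ spectrum ℂ B, ν = lam - μ := by
  constructor
  · intro hν
    obtain ⟨Y, hY⟩ := hν.exists_hasEigenvector
    have hintertwine : Y * A = (algebraMap ℂ _ ν + B) * Y := by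
      have := hY.apply_eq_smul
      rw [sylvesterOp_apply, sub_eq_iff_eq_add] at this
      rw [this, Matrix.add_mul, Algebra.algebraMap_eq_smul_one, Matrix.smul_mul, Matrix.one_mul]
    obtain ⟨lam, hA, hB⟩ := exists_mem_spectrum_of_mul_eq_mul hY.2 hintertwine
    rw [← spectrum.singleton_add_eq, Set.singleton_add] at hB
    obtain ⟨μ, hμ, rfl⟩ := hB
    exact ⟨ν + μ, hA, μ, hμ, by ring⟩
  · rintro ⟨lam, hlam, μ, hμ, rfl⟩
    obtain ⟨u, hu0, hu⟩ := exists_vecMul_eq_smul_of_mem_spectrum hlam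
    obtain ⟨w, hw0, hw⟩ := exists_mulVec_eq_smul_of_mem_spectrum hμ
    exact hasEigenvalue_of_hasEigenvector
      ⟨mem_eigenspace_iff.mpr (sylvesterOp_vecMulVec hu hw), vecMulVec_ne_zero' hw0 hu0⟩

theorem spectrum_sylvesterOp_general {n m : ℕ}
    (A : Matrix (Fin n) (Fin n) ℂ) (B : Matrix (Fin m) (Fin m) ℂ) :
    (∀ ν : ℂ, Module.End.HasEigenvalue (sylvesterOp A B) ν ↔
        ∃ lam ∈ spectrum ℂ A, ∃ μ ∈ spectrum ℂ B, ν = lam - μ) ∧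
      spectrum ℂ (sylvesterOp A B) = spectrum ℂ A - spectrum ℂ B := by
  refine ⟨hasEigenvalue_sylvesterOp_iff A B, Set.ext fun ν => ?_⟩
  rw [← hasEigenvalue_iff_mem_spectrum, hasEigenvalue_sylvesterOp_iff, Set.mem_sub]
  simp only [eq_comm]

/-- For `n, m ≥ 1`, `ν` is an eigenvalue of the Sylvester operator `S_{A,B}`
iff `ν = λ - μ` for some `λ ∈ σ(A)`, `μ ∈ σ(B)`; i.e. `σ(S_{A,B}) = σ(A) - σ(B)`. -/
theorem spectrum_sylvesterOp {n m : ℕ} (hn : 0 < n) (hm : 0 < m)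
    (A : Matrix (Fin n) (Fin n) ℂ) (B : Matrix (Fin m) (Fin m) ℂ) :
    (∀ ν : ℂ, Module.End.HasEigenvalue (sylvesterOp A B) ν ↔
        ∃ lam ∈ spectrum ℂ A, ∃ μ ∈ spectrum ℂ B, ν = lam - μ) ∧
      spectrum ℂ (sylvesterOp A B) = spectrum ℂ A - spectrum ℂ B :=
  spectrum_sylvesterOp_general A B
end

section
/- Let α, c ∈ ℝ with α > c > 0, and let x ∈ [α − c, α + c]. Set t = (x − α)/c, z = −α/c + √((α/c)² − 1), and S₀ = 1/√(α² − c²). Then z ∈ (−1, 0), the series S₀·T₀(t) + 2·S₀·Σ_{k=1}^{∞} z^k · T_k(t) converges absolutely, and its sum equals 1/x, where T_k denotes the k-th Chebyshev polynomial of the first kind. -/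
/-!
Write `t = cos θ`, so that `T_k(t) = cos kθ`. Then `∑ z^k cos kθ` is the real part of the geometric
series of `z e^{iθ}`, and `∑_k (k = 0 ? 1 : 2) z^k T_k(t) = (1 - z²) / (1 - 2zt + z²)`. As `z` is a
root of `z² + 2(α/c) z + 1`, the denominator is `-2zx/c` and the numerator `-2zd/c` with
`d = √(α² - c²)`, so the series times `S₀ = 1/d` sums to `1/x`. It converges absolutely because
`|T_k(t)| ≤ 1` and `|z| < 1`.
-/

open Polynomial.Chebyshev

lemma one_sub_two_mul_mul_add_sq_pos {r t : ℝ} (hr : |r| < 1) (ht : |t| ≤ 1) :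
    0 < 1 - 2 * r * t + r ^ 2 := by
  have hrt : r * t ≤ |r| :=
    calc r * t ≤ |r| * |t| := (le_abs_self _).trans (abs_mul r t).le
      _ ≤ |r| := mul_le_of_le_one_right (abs_nonneg r) ht
  nlinarith [sq_abs r, mul_pos (sub_pos.2 hr) (sub_pos.2 hr)]

theorem hasSum_pow_mul_cos_nat_mul {r : ℝ} (hr : |r| < 1) (θ : ℝ) :
    HasSum (fun n : ℕ => r ^ n * Real.cos (n * θ))
      ((1 - r * Real.cos θ) / (1 - 2 * r * Real.cos θ + r ^ 2)) := by
  set u : ℂ := r * Complex.exp (θ * Complex.I)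
  have hu : ‖u‖ < 1 := by simpa [u, Complex.norm_exp_ofReal_mul_I] using hr
  have hu_pow_re (n : ℕ) : (u ^ n).re = r ^ n * Real.cos (n * θ) := by
    rw [mul_pow, ← Complex.exp_nat_mul, ← Complex.ofReal_pow, Complex.re_ofReal_mul,
      show (n : ℂ) * (θ * Complex.I) = ((n * θ : ℝ) : ℂ) * Complex.I by push_cast; ring,
      Complex.exp_ofReal_mul_I_re]
  have hu_re : u.re = r * Real.cos θ := by
    rw [Complex.re_ofReal_mul, Complex.exp_ofReal_mul_I_re]
  have hu_im : u.im = r * Real.sin θ := by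
    rw [Complex.im_ofReal_mul, Complex.exp_ofReal_mul_I_im]
  have hsum : ((1 - u)⁻¹).re = (1 - r * Real.cos θ) / (1 - 2 * r * Real.cos θ + r ^ 2) := by
    rw [Complex.inv_re, Complex.normSq_apply]
    simp only [Complex.sub_re, Complex.sub_im, Complex.one_re, Complex.one_im, hu_re, hu_im]
    congr 1
    linear_combination r ^ 2 * Real.sin_sq_add_cos_sq θ
  simpa only [hu_pow_re, hsum] using Complex.hasSum_re (hasSum_geometric_of_norm_lt_one hu)

theorem hasSum_pow_mul_eval_T {r t : ℝ} (hr : |r| < 1) (ht : |t| ≤ 1) :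
    HasSum (fun n : ℕ => r ^ n * (T ℝ n).eval t) ((1 - r * t) / (1 - 2 * r * t + r ^ 2)) := by
  obtain ⟨ht₁, ht₂⟩ := abs_le.1 ht
  rw [← Real.cos_arccos ht₁ ht₂]
  simpa only [T_real_cos, Int.cast_natCast] using hasSum_pow_mul_cos_nat_mul hr (Real.arccos t)

theorem hasSum_ite_mul_pow_mul_eval_T (a : ℝ) {r t : ℝ} (hr : |r| < 1) (ht : |t| ≤ 1) :
    HasSum (fun n : ℕ => (if n = 0 then a else 2 * a * r ^ n) * (T ℝ n).eval t)
      (a * (1 - r ^ 2) / (1 - 2 * r * t + r ^ 2)) := by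
  have hD := (one_sub_two_mul_mul_add_sq_pos hr ht).ne'
  have hterm (n : ℕ) : (if n = 0 then a else 2 * a * r ^ n) * (T ℝ n).eval t =
      2 * a * (r ^ n * (T ℝ n).eval t) - if n = 0 then a else 0 := by
    rcases eq_or_ne n 0 with rfl | hn
    · simp only [if_pos, pow_zero, Nat.cast_zero, T_zero, Polynomial.eval_one]; ring
    · simp only [if_neg hn]; ring
  have hvalue : a * (1 - r ^ 2) / (1 - 2 * r * t + r ^ 2) =
      2 * a * ((1 - r * t) / (1 - 2 * r * t + r ^ 2)) - a := by
    rw [eq_sub_iff_add_eq, mul_div_assoc', div_add' _ _ _ hD, div_left_inj' hD]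
    ring
  simpa only [hterm, hvalue] using
    ((hasSum_pow_mul_eval_T hr ht).mul_left (2 * a)).sub (hasSum_ite_eq 0 a)

theorem summable_abs_ite_mul_pow_mul_eval_T (a : ℝ) {r t : ℝ} (hr : |r| < 1) (ht : |t| ≤ 1) :
    Summable (fun n : ℕ => |(if n = 0 then a else 2 * a * r ^ n) * (T ℝ n).eval t|) := by
  refine .of_nonneg_of_le (fun n => abs_nonneg _) (fun n => ?_)
    ((summable_geometric_of_lt_one (abs_nonneg r) hr).mul_left (2 * |a|))
  rw [abs_mul]
  refine (mul_le_of_le_one_right (abs_nonneg _) (abs_eval_T_real_le_one n ht)).trans ?_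
  rcases eq_or_ne n 0 with rfl | hn
  · simp only [↓reduceIte, pow_zero, mul_one]; linarith [abs_nonneg a]
  · simp [hn, abs_mul]

lemma neg_div_add_sqrt_div_sq_sub_one {α c : ℝ} (hc : 0 < c) :
    -(α / c) + √((α / c) ^ 2 - 1) = (√(α ^ 2 - c ^ 2) - α) / c := by
  rw [show (α / c) ^ 2 - 1 = (α ^ 2 - c ^ 2) / c ^ 2 by field_simp,
    Real.sqrt_div' _ (sq_nonneg c), Real.sqrt_sq hc.le]
  ring

lemma sqrt_sq_sub_sq_sub_div_mem_Ioo {α c : ℝ} (hc : 0 < c) (hαc : c < α) :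
    (√(α ^ 2 - c ^ 2) - α) / c ∈ Set.Ioo (-1) 0 := by
  have hd := Real.sq_sqrt (show 0 ≤ α ^ 2 - c ^ 2 by nlinarith)
  have hd₀ := Real.sqrt_nonneg (α ^ 2 - c ^ 2)
  rw [Set.mem_Ioo, lt_div_iff₀ hc, div_neg_iff]
  constructor
  · nlinarith
  · right
    exact ⟨by nlinarith, hc⟩

lemma one_div_mul_one_sub_sq_div_eq_one_div {α c d z t : ℝ} (hc : c ≠ 0) (hd : d ≠ 0)
    (hd2 : d ^ 2 = α ^ 2 - c ^ 2) (hz : c * z = d - α) (hx : α + c * t ≠ 0) :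
    1 / d * (1 - z ^ 2) / (1 - 2 * z * t + z ^ 2) = 1 / (α + c * t) := by
  have hnum : c ^ 2 * (1 - z ^ 2) = 2 * d * (α - d) := by
    linear_combination (-(c * z) - d + α) * hz + hd2
  have hden : c ^ 2 * (1 - 2 * z * t + z ^ 2) = 2 * (α - d) * (α + c * t) := by
    linear_combination (c * z - 2 * c * t + d - α) * hz + hd2
  have hden₀ : 1 - 2 * z * t + z ^ 2 ≠ 0 := by
    intro h
    rw [h, mul_zero] at hden
    have hdα : α - d ≠ 0 := by
      intro hdα
      exact hc (pow_eq_zero_iff two_ne_zero |>.1 (by linear_combination (α + d) * hdα + hd2))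
    exact mul_ne_zero (mul_ne_zero two_ne_zero hdα) hx hden.symm
  rw [one_div_mul_eq_div, div_div, div_eq_div_iff (mul_ne_zero hd hden₀) hx, one_mul]
  refine mul_left_cancel₀ (pow_ne_zero 2 hc) ?_
  linear_combination (α + c * t) * hnum - d * hden

/-- For `α > c > 0` and `x ∈ [α - c, α + c]`, with `t = (x - α)/c`,
`z = -α/c + √((α/c)² - 1)` and `S₀ = 1/√(α² - c²)`, we have `z ∈ (-1, 0)`, the Chebyshev series
`S₀·T₀(t) + 2S₀·Σ_{k≥1} z^k T_k(t)` converges absolutely, and its sum is `1/x`. -/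
theorem chebyshev_series_inverse (α c x : ℝ) (hc : 0 < c) (hαc : c < α)
    (hx : x ∈ Set.Icc (α - c) (α + c))
    (t z S₀ : ℝ)
    (ht : t = (x - α) / c)
    (hz : z = -(α / c) + Real.sqrt ((α / c) ^ 2 - 1))
    (hS₀ : S₀ = 1 / Real.sqrt (α ^ 2 - c ^ 2)) :
    z ∈ Set.Ioo (-1 : ℝ) 0 ∧
      Summable (fun k : ℕ =>
        |(if k = 0 then S₀ else 2 * S₀ * z ^ k) *
          (Polynomial.Chebyshev.T ℝ (k : ℤ)).eval t|) ∧
      HasSum (fun k : ℕ =>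
        (if k = 0 then S₀ else 2 * S₀ * z ^ k) *
          (Polynomial.Chebyshev.T ℝ (k : ℤ)).eval t) (1 / x) := by
  rw [neg_div_add_sqrt_div_sq_sub_one hc] at hz
  have hz_mem : z ∈ Set.Ioo (-1) 0 := hz ▸ sqrt_sq_sub_sq_sub_div_mem_Ioo hc hαc
  have hz_abs : |z| < 1 := abs_lt.2 ⟨hz_mem.1, hz_mem.2.trans one_pos⟩
  have ht_abs : |t| ≤ 1 := by
    rw [ht, abs_le, le_div_iff₀ hc, div_le_iff₀ hc]
    constructor <;> linarith [hx.1, hx.2]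
  have hx_eq : x = α + c * t := by rw [ht]; field_simp; ring
  have hx₀ : α + c * t ≠ 0 := by rw [← hx_eq]; linarith [hx.1]
  refine ⟨hz_mem, summable_abs_ite_mul_pow_mul_eval_T S₀ hz_abs ht_abs, ?_⟩
  have hsq : 0 < α ^ 2 - c ^ 2 := by nlinarith
  have hsum_eq := one_div_mul_one_sub_sq_div_eq_one_div (z := z) (t := t) hc.ne'
    (Real.sqrt_pos.2 hsq).ne' (Real.sq_sqrt hsq.le) (by rw [hz]; field_simp) hx₀
  rw [hx_eq, ← hsum_eq, ← hS₀]
  exact hasSum_ite_mul_pow_mul_eval_T S₀ hz_abs ht_abs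
end

section
/- Let β ∈ (0, 1) and Σ_β = [−1, −β] ∪ [β, 1], with weight w_β(x) = (1/π)·√|x + β| / (√(1 − x²)·√|x − β|) for x in the interior of Σ_β. Define polynomials (p_j)_{j≥0} by p_0 = 1, p_1(x) = (x − a_0)/b_0, and p_{k+1}(x) = (x·p_k(x) − a_k·p_k(x) − b_{k−1}·p_{k−1}(x))/b_k for k ≥ 1, where a_k = (−1)^k·β for all k ≥ 0, b_0 = √((1 − β²)/2), and b_k = √(1 − β²)/2 for k ≥ 1. Then these polynomials are orthonormal with respect to w_β: for all j, k ≥ 0, ∫_{Σ_β} p_j(x)·p_k(x)·w_β(x) dx = δ_{jk} (in particular ∫_{Σ_β} w_β(x) dx = 1). -/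
/-!
Write `x(θ) = √((1 + β² + (1 - β²) cos θ) / 2)`, which maps `(0, π)` decreasingly onto `(β, 1)`.
The substitutions `x = x(θ)` and `x = -x(θ)` turn `w_β(x) dx` into `(x(θ) + β) / (2π x(θ)) dθ` and
`(x(θ) - β) / (2π x(θ)) dθ` respectively. On both branches `x² - β² = b₀² (1 + cos θ)`, and the
three-term recurrence becomes trigonometric: `p_{2n}(x) = √2 cos (n θ)` for `n ≥ 1` and
`p_{2n+1}(x) = (x - β) cos ((n + ½) θ) / (b₀ cos (θ / 2))`. Adding the two branches, the pull-back
of `p_j p_k w_β dx` is `φ_j φ_k dθ / π` with `φ_j = √2 cos (j θ / 2)` (and `φ_0 = 1`) when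
`j ≡ k (mod 2)`, and `0` otherwise; the `φ_j` of one parity are orthonormal on `[0, π]` for
`dθ / π`.
-/

open Real MeasureTheory Set Polynomial

lemma integrableOn_Ioo_comp_neg_iff {a b : ℝ} {F : ℝ → ℝ} :
    IntegrableOn (fun x => F (-x)) (Ioo a b) ↔ IntegrableOn F (Ioo (-b) (-a)) := by
  rw [← image_neg_Ioo, integrableOn_image_iff_integrableOn_abs_deriv_smul measurableSet_Ioo
    (fun x _ => (hasDerivAt_neg x).hasDerivWithinAt) neg_injective.injOn]
  simp

lemma setIntegral_Ioo_comp_neg {a b : ℝ} (F : ℝ → ℝ) :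
    ∫ x in Ioo a b, F (-x) = ∫ x in Ioo (-b) (-a), F x := by
  rw [← image_neg_Ioo, integral_image_eq_integral_abs_deriv_smul measurableSet_Ioo
    (fun x _ => (hasDerivAt_neg x).hasDerivWithinAt) neg_injective.injOn]
  simp

namespace Akhiezer

noncomputable def normCos (j : ℕ) (θ : ℝ) : ℝ := if j = 0 then 1 else √2 * cos (j * θ / 2)

lemma integral_cos_int_mul (n : ℤ) :
    ∫ θ in 0..π, cos (n * θ) = if n = 0 then π else 0 := by
  split_ifs with hn
  · simp [hn]
  · rw [intervalIntegral.integral_comp_mul_left (fun x => cos x) (Int.cast_ne_zero.2 hn)]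
    simp [integral_cos, sin_int_mul_pi]

lemma integral_cos_half_mul_cos_half {j k : ℕ} (hjk : Even (j + k)) :
    ∫ θ in 0..π, cos (j * θ / 2) * cos (k * θ / 2) =
      ((if j + k = 0 then π else 0) + (if j = k then π else 0)) / 2 := by
  obtain ⟨s, hs⟩ := hjk
  have hs' : (j : ℝ) + k = s + s := by exact_mod_cast hs
  have hprod (θ : ℝ) : cos (j * θ / 2) * cos (k * θ / 2) =
      (cos ((s : ℤ) * θ) + cos (((s : ℤ) - k : ℤ) * θ)) / 2 := by
    rw [show ((s : ℤ) : ℝ) * θ = j * θ / 2 + k * θ / 2 by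
        push_cast; linear_combination -θ / 2 * hs',
      show (((s : ℤ) - k : ℤ) : ℝ) * θ = j * θ / 2 - k * θ / 2 by
        push_cast; linear_combination -θ / 2 * hs', cos_add, cos_sub]
    ring
  have hint (n : ℤ) : IntervalIntegrable (fun θ => cos (n * θ)) volume 0 π := by
    apply Continuous.intervalIntegrable; fun_prop
  simp_rw [hprod]
  rw [intervalIntegral.integral_div, intervalIntegral.integral_add (hint _) (hint _),
    integral_cos_int_mul, integral_cos_int_mul]
  congr 3 <;> simp only [eq_iff_iff] <;> omega

lemma integral_normCos_mul_normCos {j k : ℕ} (hjk : Even (j + k)) :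
    ∫ θ in 0..π, normCos j θ * normCos k θ = if j = k then π else 0 := by
  have hcos (n : ℕ) (θ : ℝ) : normCos n θ = (if n = 0 then 1 else √2) * cos (n * θ / 2) := by
    unfold normCos; split_ifs with h <;> simp [h]
  simp_rw [hcos, mul_mul_mul_comm _ (cos _)]
  rw [intervalIntegral.integral_const_mul, integral_cos_half_mul_cos_half hjk]
  rcases eq_or_ne j k with rfl | hne
  · rcases eq_or_ne j 0 with rfl | hj
    · simp
    · simp only [hj, if_false, mul_self_sqrt zero_le_two, if_true, Nat.add_eq_zero_iff, and_self,
        zero_add]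
      ring
  · have hj0 : ¬(j = 0 ∧ k = 0) := by omega
    simp [hne, hj0]

lemma integral_parity_normCos_div_pi (j k : ℕ) :
    ∫ θ in 0..π, (if Even (j + k) then normCos j θ * normCos k θ else 0) / π =
      if j = k then 1 else 0 := by
  by_cases hjk : Even (j + k)
  · simp only [hjk, if_true]
    rw [intervalIntegral.integral_div, integral_normCos_mul_normCos hjk]
    split_ifs <;> simp [pi_ne_zero]
  · have : j ≠ k := by rintro rfl; exact hjk ⟨j, rfl⟩
    simp [hjk, this]

/-- `halfCosRatio n θ = cos ((n + 1/2) θ) / cos (θ / 2)`, written as a recursion so that it has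
no junk value at `θ = π`. -/
noncomputable def halfCosRatio : ℕ → ℝ → ℝ
  | 0, _ => 1
  | n + 1, θ => 2 * cos ((n + 1) * θ) - halfCosRatio n θ

lemma one_add_cos_mul_halfCosRatio (n : ℕ) (θ : ℝ) :
    (1 + cos θ) * halfCosRatio n θ = cos ((n + 1) * θ) + cos (n * θ) := by
  induction n with
  | zero => simp [halfCosRatio, add_comm]
  | succ n ih =>
    have h := two_mul_cos_mul_cos ((n + 1) * θ) θ
    rw [show (n + 1) * θ - θ = n * θ by ring, show (n + 1) * θ + θ = (n + 1 + 1) * θ by ring] at h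
    simp only [halfCosRatio]
    push_cast
    linear_combination h - ih

lemma cos_half_mul_halfCosRatio (n : ℕ) (θ : ℝ) :
    cos (θ / 2) * halfCosRatio n θ = cos ((2 * n + 1) * θ / 2) := by
  induction n with
  | zero => simp [halfCosRatio]
  | succ n ih =>
    have h := two_mul_cos_mul_cos ((n + 1) * θ) (θ / 2)
    rw [show (n + 1) * θ - θ / 2 = (2 * n + 1) * θ / 2 by ring,
      show (n + 1) * θ + θ / 2 = (2 * (n + 1) + 1) * θ / 2 by ring] at h
    simp only [halfCosRatio]
    push_cast
    linear_combination h - ih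

lemma normCos_two_mul_add_one (n : ℕ) (θ : ℝ) :
    normCos (2 * n + 1) θ = √2 * cos (θ / 2) * halfCosRatio n θ := by
  rw [normCos, if_neg (by omega), mul_assoc, cos_half_mul_halfCosRatio]
  push_cast
  ring_nf

lemma normCos_two_mul_of_ne_zero {n : ℕ} (hn : n ≠ 0) (θ : ℝ) :
    normCos (2 * n) θ = √2 * cos (n * θ) := by
  rw [normCos, if_neg (by omega)]
  push_cast
  ring_nf

lemma normCos_odd_mul_normCos_odd (m n : ℕ) (θ : ℝ) :
    normCos (2 * m + 1) θ * normCos (2 * n + 1) θ =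
      (1 + cos θ) * halfCosRatio m θ * halfCosRatio n θ := by
  have h := cos_sq (θ / 2)
  rw [show 2 * (θ / 2) = θ by ring] at h
  rw [normCos_two_mul_add_one, normCos_two_mul_add_one]
  linear_combination (norm := ring_nf) (2 * halfCosRatio m θ * halfCosRatio n θ) * h +
    (halfCosRatio m θ * halfCosRatio n θ * cos (θ / 2) ^ 2) * sq_sqrt zero_le_two

section Recurrence

variable {β : ℝ} {a b : ℕ → ℝ} {p : ℕ → ℝ[X]}
  (ha : ∀ k, a k = (-1 : ℝ) ^ k * β)
  (hb0 : b 0 = √((1 - β ^ 2) / 2))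
  (hb : ∀ k, 1 ≤ k → b k = √(1 - β ^ 2) / 2)
  (hp0 : p 0 = 1)
  (hp1 : p 1 = C (b 0)⁻¹ * (X - C (a 0)))
  (hprec : ∀ k, 1 ≤ k → p (k + 1) =
      C (b k)⁻¹ * (X * p k - C (a k) * p k - C (b (k - 1)) * p (k - 1)))
include ha hb0 hb hp0 hp1 hprec

theorem eval_two_mul_and_eval_two_mul_add_one (hβ : β ^ 2 < 1) {x θ : ℝ}
    (hx : x ^ 2 = (1 + β ^ 2 + (1 - β ^ 2) * cos θ) / 2) (n : ℕ) :
    (p (2 * n)).eval x = normCos (2 * n) θ ∧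
      (p (2 * n + 1)).eval x = (x - β) * halfCosRatio n θ / b 0 := by
  have hs2 : √2 ^ 2 = 2 := sq_sqrt zero_le_two
  have hb00 : b 0 ≠ 0 := by rw [hb0]; exact (sqrt_pos.2 (by linarith)).ne'
  have hbk (k : ℕ) (hk : 1 ≤ k) : b k = b 0 / √2 := by
    rw [hb k hk, hb0, sqrt_div' _ zero_le_two, div_div, ← sq, hs2]
  have hxb : x ^ 2 - β ^ 2 = b 0 ^ 2 * (1 + cos θ) := by
    rw [hb0, sq_sqrt (by nlinarith), hx]; ring
  have hbE (m : ℕ) : b (2 * m) * normCos (2 * m) θ = b 0 * cos (m * θ) := by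
    rcases eq_or_ne m 0 with rfl | hm
    · simp [normCos]
    · rw [hbk _ (by omega), normCos_two_mul_of_ne_zero hm]; field_simp
  have ha_odd (m : ℕ) : a (2 * m + 1) = -β := by simp [ha, pow_succ]
  have ha_even (m : ℕ) : a (2 * m) = β := by simp [ha]
  induction n with
  | zero =>
    refine ⟨by simp [hp0, normCos], ?_⟩
    simp [hp1, ha, halfCosRatio, div_eq_inv_mul]
  | succ n ih =>
    obtain ⟨hE, hO⟩ := ih
    have hE' : (p (2 * (n + 1))).eval x = normCos (2 * (n + 1)) θ := by
      rw [show 2 * (n + 1) = 2 * n + 1 + 1 by ring, hprec _ (by omega), Nat.add_sub_cancel]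
      simp only [eval_mul, eval_sub, eval_X, eval_C, hE, hO]
      rw [hbk _ (by omega), ha_odd, hbE, ← show 2 * (n + 1) = 2 * n + 1 + 1 by ring,
        normCos_two_mul_of_ne_zero (by omega)]
      push_cast
      field_simp
      linear_combination (norm := ring_nf)
        halfCosRatio n θ * hxb + b 0 ^ 2 * one_add_cos_mul_halfCosRatio n θ
    refine ⟨hE', ?_⟩
    rw [hprec _ (by omega), show 2 * (n + 1) - 1 = 2 * n + 1 by omega]
    simp only [eval_mul, eval_sub, eval_X, eval_C, hE', hO]
    rw [hbk _ (by omega), hbk (2 * n + 1) (by omega), ha_even,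
      normCos_two_mul_of_ne_zero (by omega), halfCosRatio]
    push_cast
    field_simp
    linear_combination (norm := ring_nf) (x - β) * cos ((n + 1) * θ) * hs2

theorem eval_mul_eval_add_eval_neg_mul_eval_neg (hβ : β ^ 2 < 1) {g θ : ℝ}
    (hg : g ^ 2 = (1 + β ^ 2 + (1 - β ^ 2) * cos θ) / 2) (j k : ℕ) :
    (p j).eval g * (p k).eval g * (g + β) + (p j).eval (-g) * (p k).eval (-g) * (g - β) =
      2 * g * if Even (j + k) then normCos j θ * normCos k θ else 0 := by
  have hg' : (-g) ^ 2 = (1 + β ^ 2 + (1 - β ^ 2) * cos θ) / 2 := by rw [neg_sq, hg]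
  have hval := eval_two_mul_and_eval_two_mul_add_one ha hb0 hb hp0 hp1 hprec hβ hg
  have hval' := eval_two_mul_and_eval_two_mul_add_one ha hb0 hb hp0 hp1 hprec hβ hg'
  rcases Nat.even_or_odd' j with ⟨m, rfl | rfl⟩ <;> rcases Nat.even_or_odd' k with ⟨n, rfl | rfl⟩
  · rw [(hval m).1, (hval n).1, (hval' m).1, (hval' n).1, if_pos ⟨m + n, by ring⟩]
    ring
  · rw [(hval m).1, (hval n).2, (hval' m).1, (hval' n).2,
      if_neg (Nat.not_even_iff_odd.2 ⟨m + n, by ring⟩)]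
    ring
  · rw [(hval m).2, (hval n).1, (hval' m).2, (hval' n).1,
      if_neg (Nat.not_even_iff_odd.2 ⟨m + n, by ring⟩)]
    ring
  · have hb00 : b 0 ≠ 0 := by rw [hb0]; exact (sqrt_pos.2 (by linarith)).ne'
    have hgb : g ^ 2 - β ^ 2 = b 0 ^ 2 * (1 + cos θ) := by
      rw [hb0, sq_sqrt (by nlinarith), hg]; ring
    rw [(hval m).2, (hval n).2, (hval' m).2, (hval' n).2, if_pos ⟨m + n + 1, by ring⟩,
      normCos_odd_mul_normCos_odd]
    field_simp
    linear_combination (2 * g * halfCosRatio m θ * halfCosRatio n θ) * hgb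

end Recurrence

noncomputable def param (β θ : ℝ) : ℝ := √((1 + β ^ 2 + (1 - β ^ 2) * cos θ) / 2)

noncomputable def weight (β x : ℝ) : ℝ :=
  (1 / π) * √|x + β| / (√(1 - x ^ 2) * √|x - β|)

section Param

variable {β : ℝ}

lemma sq_le_param_radicand (hβ : β ^ 2 ≤ 1) (θ : ℝ) :
    β ^ 2 ≤ (1 + β ^ 2 + (1 - β ^ 2) * cos θ) / 2 := by
  nlinarith [neg_one_le_cos θ]

lemma param_sq (hβ : β ^ 2 ≤ 1) (θ : ℝ) :
    param β θ ^ 2 = (1 + β ^ 2 + (1 - β ^ 2) * cos θ) / 2 :=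
  sq_sqrt ((sq_nonneg β).trans (sq_le_param_radicand hβ θ))

lemma param_pos (h0 : β ≠ 0) (hβ : β ^ 2 ≤ 1) (θ : ℝ) : 0 < param β θ :=
  sqrt_pos.2 ((sq_pos_of_ne_zero h0).trans_le (sq_le_param_radicand hβ θ))

lemma continuous_param : Continuous (param β) := by
  unfold param; fun_prop

lemma strictAntiOn_param (hβ : β ^ 2 < 1) : StrictAntiOn (param β) (Icc 0 π) := by
  intro x hx y hy hxy
  apply sqrt_lt_sqrt ((sq_nonneg β).trans (sq_le_param_radicand hβ.le y))
  nlinarith [strictAntiOn_cos hx hy hxy]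

lemma param_image_Ioo (h0 : 0 < β) (hβ : β < 1) : param β '' Ioo 0 π = Ioo β 1 := by
  have hanti := strictAntiOn_param (β := β) (by nlinarith)
  have hparam0 : param β 0 = 1 := by simp [param]
  have hparamπ : param β π = β := by
    rw [param, cos_pi, show (1 + β ^ 2 + (1 - β ^ 2) * -1) / 2 = β ^ 2 by ring, sqrt_sq h0.le]
  refine Subset.antisymm ?_ ?_
  · rintro _ ⟨θ, hθ, rfl⟩
    have hθ' := Ioo_subset_Icc_self hθ
    constructor
    · simpa [hparamπ] using hanti hθ' (right_mem_Icc.2 pi_pos.le) hθ.2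
    · simpa [hparam0] using hanti (left_mem_Icc.2 pi_pos.le) hθ' hθ.1
  · have := intermediate_value_Ioo' pi_pos.le continuous_param.continuousOn (f := param β)
    rwa [hparamπ, hparam0] at this

lemma hasDerivAt_param (h0 : β ≠ 0) (hβ : β ^ 2 ≤ 1) (θ : ℝ) :
    HasDerivAt (param β) (-((1 - β ^ 2) * sin θ) / (4 * param β θ)) θ := by
  have hq : HasDerivAt (fun θ => (1 + β ^ 2 + (1 - β ^ 2) * cos θ) / 2)
      ((1 - β ^ 2) * -sin θ / 2) θ :=
    (((hasDerivAt_cos θ).const_mul _).const_add _).div_const 2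
  refine (hq.sqrt ?_).congr_deriv ?_
  · exact (sq_pos_of_ne_zero h0).trans_le (sq_le_param_radicand hβ θ) |>.ne'
  · unfold param; ring

lemma weight_mul_sqrt {s x : ℝ} (hs : |s| < x) (hx : x < 1) :
    weight s x * √((1 - x ^ 2) * (x ^ 2 - s ^ 2)) = (x + s) / π := by
  have hxs : 0 < x - s := by linarith [le_abs_self s]
  have hxs' : 0 < x + s := by linarith [neg_abs_le s]
  have h1x : 0 < 1 - x ^ 2 := by nlinarith [abs_nonneg s]
  rw [weight, abs_of_pos hxs, abs_of_pos hxs', show x ^ 2 - s ^ 2 = (x - s) * (x + s) by ring,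
    sqrt_mul h1x.le, sqrt_mul hxs.le]
  field_simp
  rw [sq_sqrt hxs'.le]

lemma weight_neg (β x : ℝ) : weight β (-x) = weight (-β) x := by
  rw [weight, weight, neg_sq, neg_add_eq_sub, abs_sub_comm, ← neg_add', abs_neg, sub_neg_eq_add,
    ← sub_eq_add_neg]

/-- The Jacobian of `param` cancels the singularities of the weight:
`(1 - x²)(x² - β²) = ((1 - β²) sin θ / 2)²` along `x = param β θ`. -/
lemma abs_deriv_param_mul_weight (h0 : 0 < β) (hβ : β < 1) {s : ℝ} (hs : s ^ 2 = β ^ 2)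
    {θ : ℝ} (hθ : θ ∈ Ioo 0 π) :
    |-((1 - β ^ 2) * sin θ) / (4 * param β θ)| * weight s (param β θ) =
      (param β θ + s) / (2 * π * param β θ) := by
  have hβ2 : β ^ 2 < 1 := by nlinarith
  obtain ⟨hβg, hg1⟩ : param β θ ∈ Ioo β 1 := param_image_Ioo h0 hβ ▸ mem_image_of_mem _ hθ
  have hsβ : |s| = β := by rw [← abs_of_pos h0]; exact (sq_eq_sq_iff_abs_eq_abs _ _).1 hs
  have hsin : 0 < sin θ := sin_pos_of_pos_of_lt_pi hθ.1 hθ.2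
  have hsqrt : √((1 - param β θ ^ 2) * (param β θ ^ 2 - s ^ 2)) = (1 - β ^ 2) / 2 * sin θ := by
    rw [← sqrt_sq (by positivity : 0 ≤ (1 - β ^ 2) / 2 * sin θ), hs, param_sq hβ2.le]
    congr 1
    linear_combination (-((1 - β ^ 2) / 2) ^ 2) * sin_sq_add_cos_sq θ
  have hw := weight_mul_sqrt (hsβ.trans_lt hβg) hg1
  rw [hsqrt, eq_div_iff pi_ne_zero] at hw
  have hg : 0 < param β θ := h0.trans hβg
  rw [abs_div, abs_neg, abs_of_pos (by positivity), abs_of_pos (by positivity)]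
  field_simp
  linear_combination 4 * hw

lemma continuous_mul_param_ratio (h0 : β ≠ 0) (hβ : β ^ 2 ≤ 1) {f : ℝ → ℝ} (hf : Continuous f)
    (s : ℝ) : Continuous fun θ => f (param β θ) * ((param β θ + s) / (2 * π * param β θ)) := by
  refine (hf.comp continuous_param).mul ((continuous_param.add continuous_const).div
    (continuous_const.mul continuous_param) fun θ => ?_)
  have := param_pos h0 hβ θ
  positivity

theorem integrableOn_Ioo_and_setIntegral_Ioo_mul_weight (h0 : 0 < β) (hβ : β < 1) {s : ℝ}
    (hs : s ^ 2 = β ^ 2) {f : ℝ → ℝ} (hf : Continuous f) :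
    IntegrableOn (fun x => f x * weight s x) (Ioo β 1) ∧
      ∫ x in Ioo β 1, f x * weight s x =
        ∫ θ in 0..π, f (param β θ) * ((param β θ + s) / (2 * π * param β θ)) := by
  have hβ2 : β ^ 2 < 1 := by nlinarith
  have hderiv (θ : ℝ) (_ : θ ∈ Ioo 0 π) :=
    (hasDerivAt_param h0.ne' hβ2.le θ).hasDerivWithinAt (s := Ioo 0 π)
  have hinj : InjOn (param β) (Ioo 0 π) :=
    (strictAntiOn_param hβ2).injOn.mono Ioo_subset_Icc_self
  have heq : EqOn (fun θ => |-((1 - β ^ 2) * sin θ) / (4 * param β θ)| •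
        (f (param β θ) * weight s (param β θ)))
      (fun θ => f (param β θ) * ((param β θ + s) / (2 * π * param β θ))) (Ioo 0 π) := by
    intro θ hθ
    simp only [smul_eq_mul]
    rw [mul_left_comm, abs_deriv_param_mul_weight h0 hβ hs hθ]
  rw [← param_image_Ioo h0 hβ]
  constructor
  · rw [integrableOn_image_iff_integrableOn_abs_deriv_smul measurableSet_Ioo hderiv hinj]
    exact ((continuous_mul_param_ratio h0.ne' hβ2.le hf s).integrableOn_Icc.mono_set
      Ioo_subset_Icc_self).congr_fun heq.symm measurableSet_Ioo
  · rw [integral_image_eq_integral_abs_deriv_smul measurableSet_Ioo hderiv hinj,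
      setIntegral_congr_fun measurableSet_Ioo heq, intervalIntegral.integral_of_le pi_pos.le,
      integral_Ioc_eq_integral_Ioo]

theorem setIntegral_union_mul_weight (h0 : 0 < β) (hβ : β < 1) {f : ℝ → ℝ} (hf : Continuous f) :
    ∫ x in Icc (-1) (-β) ∪ Icc β 1, f x * weight β x =
      ∫ θ in 0..π, (f (param β θ) * (param β θ + β) + f (-param β θ) * (param β θ - β)) /
        (2 * π * param β θ) := by
  have hβ2 : β ^ 2 < 1 := by nlinarith
  obtain ⟨hintP, hP⟩ := integrableOn_Ioo_and_setIntegral_Ioo_mul_weight h0 hβ rfl hf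
  obtain ⟨hintN, hN⟩ :=
    integrableOn_Ioo_and_setIntegral_Ioo_mul_weight h0 hβ (neg_sq β) (hf.comp continuous_neg)
  simp only [Function.comp_apply, ← weight_neg] at hintN hN
  rw [integrableOn_Ioo_comp_neg_iff (F := fun x => f x * weight β x),
    ← integrableOn_Icc_iff_integrableOn_Ioo] at hintN
  rw [← integrableOn_Icc_iff_integrableOn_Ioo] at hintP
  rw [setIntegral_Ioo_comp_neg (fun x => f x * weight β x)] at hN
  have hdisj : Disjoint (Icc (-1) (-β)) (Icc β 1) :=
    disjoint_left.2 fun x hx hx' => by linarith [hx.2, hx'.1]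
  rw [setIntegral_union hdisj measurableSet_Icc hintN hintP, integral_Icc_eq_integral_Ioo,
    integral_Icc_eq_integral_Ioo, hN, hP, ← intervalIntegral.integral_add]
  · exact intervalIntegral.integral_congr fun θ _ => by ring
  · exact (continuous_mul_param_ratio h0.ne' hβ2.le (hf.comp continuous_neg) _).intervalIntegrable
      _ _
  · exact (continuous_mul_param_ratio h0.ne' hβ2.le hf _).intervalIntegrable _ _

end Param

end Akhiezer

/-- Let `β ∈ (0,1)`, `Σ_β = [-1, -β] ∪ [β, 1]`, and let
`w_β(x) = (1/π)·√|x + β| / (√(1 - x²)·√|x - β|)` be the Akhiezer weight.  The polynomials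
defined by `p_0 = 1`, `p_1(x) = (x - a_0)/b_0`,
`p_{k+1}(x) = (x·p_k(x) - a_k·p_k(x) - b_{k-1}·p_{k-1}(x))/b_k` for `k ≥ 1`, with
`a_k = (-1)^k·β`, `b_0 = √((1 - β²)/2)`, `b_k = √(1 - β²)/2` for `k ≥ 1`, are orthonormal
with respect to `w_β`:  `∫_{Σ_β} p_j p_k w_β = δ_{jk}` (in particular `∫_{Σ_β} w_β = 1`). -/
theorem akhiezer_polynomials_orthonormal (β : ℝ) (hβ : β ∈ Set.Ioo (0 : ℝ) 1)
    (w : ℝ → ℝ)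
    (hw : ∀ x, w x = (1 / Real.pi) * Real.sqrt |x + β| /
      (Real.sqrt (1 - x ^ 2) * Real.sqrt |x - β|))
    (a b : ℕ → ℝ)
    (ha : ∀ k, a k = (-1 : ℝ) ^ k * β)
    (hb0 : b 0 = Real.sqrt ((1 - β ^ 2) / 2))
    (hb : ∀ k, 1 ≤ k → b k = Real.sqrt (1 - β ^ 2) / 2)
    (p : ℕ → Polynomial ℝ)
    (hp0 : p 0 = 1)
    (hp1 : p 1 = Polynomial.C (b 0)⁻¹ * (Polynomial.X - Polynomial.C (a 0)))
    (hprec : ∀ k, 1 ≤ k → p (k + 1) =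
      Polynomial.C (b k)⁻¹ *
        (Polynomial.X * p k - Polynomial.C (a k) * p k - Polynomial.C (b (k - 1)) * p (k - 1))) :
    ∀ j k, (∫ x in Set.Icc (-1 : ℝ) (-β) ∪ Set.Icc β 1,
        (p j).eval x * (p k).eval x * w x) = if j = k then 1 else 0 := by
  obtain ⟨h0, h1⟩ := hβ
  have hβ2 : β ^ 2 < 1 := by nlinarith
  intro j k
  rw [show w = Akhiezer.weight β from funext hw, Akhiezer.setIntegral_union_mul_weight h0 h1
    (f := fun x => (p j).eval x * (p k).eval x) (by fun_prop)]
  calc _ = ∫ θ in 0..π,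
        (if Even (j + k) then Akhiezer.normCos j θ * Akhiezer.normCos k θ else 0) / π := by
        refine intervalIntegral.integral_congr fun θ _ => ?_
        have hg := Akhiezer.param_pos h0.ne' hβ2.le θ
        rw [Akhiezer.eval_mul_eval_add_eval_neg_mul_eval_neg ha hb0 hb hp0 hp1 hprec hβ2
          (Akhiezer.param_sq hβ2.le θ)]
        field_simp
    _ = _ := Akhiezer.integral_parity_normCos_div_pi j k
end
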